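/- For fixed nonnegative reals L_{ij}, i,j ∈ {1,...,N}, the function τ·log((1/N²)·∑_{i,j} exp(L_{ij}/τ)) converges to (1/N²)·∑_{i,j} L_{ij} as τ → ∞. -/

import Mathlib

/-!
With `t = 1/τ`, the quantity is `log (∑ pᵢ exp (fᵢ t)) / t`, the difference quotient at `0` of the
cumulant generating function of the weights `p`; as `τ → ∞` it tends to the derivative at `0`,
which is the mean `∑ pᵢ fᵢ`.
-/

open Filter Topology Real

theorem HasDerivAt.tendsto_mul_inv_atTop {g : ℝ → ℝ} {c : ℝ} (hg : HasDerivAt g c 0)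
    (hg0 : g 0 = 0) : Tendsto (fun τ : ℝ => τ * g τ⁻¹) atTop (𝓝 c) := by
  have hinv : Tendsto (fun τ : ℝ => τ⁻¹) atTop (𝓝[≠] 0) :=
    tendsto_inv_atTop_nhdsGT_zero.mono_right (nhdsWithin_mono _ fun _ hx => ne_of_gt hx)
  refine ((hasDerivAt_iff_tendsto_slope.mp hg).comp hinv).congr' ?_
  filter_upwards [eventually_ne_atTop 0] with τ hτ
  simp [slope_def_field, hg0, div_eq_mul_inv, mul_comm]

theorem hasDerivAt_log_sum_mul_exp_mul {ι : Type*} [Fintype ι] (p f : ι → ℝ)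
    (hp : ∑ i, p i = 1) :
    HasDerivAt (fun t => log (∑ i, p i * exp (f i * t))) (∑ i, p i * f i) 0 := by
  have hsum : HasDerivAt (fun t => ∑ i, p i * exp (f i * t)) (∑ i, p i * f i) 0 :=
    HasDerivAt.fun_sum fun i _ => by
      simpa using (((hasDerivAt_id (0 : ℝ)).const_mul (f i)).exp).const_mul (p i)
  simpa [hp] using hsum.log (by simp [hp])

theorem tendsto_mul_log_sum_mul_exp_div_atTop {ι : Type*} [Fintype ι] (p f : ι → ℝ)
    (hp : ∑ i, p i = 1) :
    Tendsto (fun τ : ℝ => τ * log (∑ i, p i * exp (f i / τ))) atTop (𝓝 (∑ i, p i * f i)) := by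
  simpa [div_eq_mul_inv, hp] using
    (hasDerivAt_log_sum_mul_exp_mul p f hp).tendsto_mul_inv_atTop (by simp [hp])

theorem stmt_2_general {N : ℕ} [NeZero N] (L : Fin N → Fin N → ℝ) :
    Filter.Tendsto
      (fun τ : ℝ => τ * Real.log ((1 / (N : ℝ) ^ 2) * ∑ i, ∑ j, Real.exp (L i j / τ)))
      Filter.atTop (nhds ((1 / (N : ℝ) ^ 2) * ∑ i, ∑ j, L i j)) := by
  have hp : ∑ _ij : Fin N × Fin N, 1 / (N : ℝ) ^ 2 = 1 := by
    have hN : (N : ℝ) ≠ 0 := Nat.cast_ne_zero.mpr (NeZero.ne N)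
    simp [field]
  simpa only [Finset.mul_sum, ← Fintype.sum_prod_type'] using
    tendsto_mul_log_sum_mul_exp_div_atTop (fun _ => 1 / (N : ℝ) ^ 2) (fun ij => L ij.1 ij.2) hp

/-- Prop. 3(b): `τ·log((1/N²)·∑ exp(L_{ij}/τ)) → (1/N²)·∑ L_{ij}` as `τ → ∞`. -/
theorem stmt_2 {N : ℕ} [NeZero N] (L : Fin N → Fin N → ℝ) (hL : ∀ i j, 0 ≤ L i j) :
    Filter.Tendsto
      (fun τ : ℝ => τ * Real.log ((1 / (N : ℝ) ^ 2) * ∑ i, ∑ j, Real.exp (L i j / τ)))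
      Filter.atTop (nhds ((1 / (N : ℝ) ^ 2) * ∑ i, ∑ j, L i j)) :=
  stmt_2_general L
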